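/- Let F1 and F1' be finite subsets of ℤ², both uniquely determined by their line sums. Put α_1 = α(F1, F1'). Then |F1 △ F1'| ≤ 2α_1·√(2α_1 + 1) − α_1. -/
import Mathlib


open Finset

/-- The row sum `r_i(F)`: the number of elements of `F` in row `i`. -/
def rowSum (F : Finset (ℤ × ℤ)) (i : ℤ) : ℤ :=
  ((F.filter fun p => p.1 = i).card : ℤ)

/-- The column sum `c_j(F)`: the number of elements of `F` in column `j`. -/
def colSum (F : Finset (ℤ × ℤ)) (j : ℤ) : ℤ :=
  ((F.filter fun p => p.2 = j).card : ℤ)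

/-- `F` is uniquely determined by its line sums. -/
def uniquelyDetermined (F : Finset (ℤ × ℤ)) : Prop :=
  ∀ F' : Finset (ℤ × ℤ),
    (∀ i, rowSum F' i = rowSum F i) → (∀ j, colSum F' j = colSum F j) → F' = F

/-- `Σ_j |c_j(F1) − c_j(F2)| + Σ_i |r_i(F1) − r_i(F2)|`; the sums over all of `ℤ`
reduce to the finite index sets below, since all other terms vanish. -/
def lineDiff (F1 F2 : Finset (ℤ × ℤ)) : ℤ :=
  (∑ j ∈ (F1 ∪ F2).image Prod.snd, |colSum F1 j - colSum F2 j|)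
    + ∑ i ∈ (F1 ∪ F2).image Prod.fst, |rowSum F1 i - rowSum F2 i|

/-- `α(F1, F2)`. -/
noncomputable def alpha (F1 F2 : Finset (ℤ × ℤ)) : ℝ :=
  (lineDiff F1 F2 : ℝ) / 2

def SwitchFree (F : Finset (ℤ × ℤ)) : Prop :=
  ∀ p ∈ F, ∀ q ∈ F, p.1 ≠ q.1 → p.2 ≠ q.2 → ((p.1, q.2) ∈ F ∨ (q.1, p.2) ∈ F)

lemma rowSum_eq_sum (F : Finset (ℤ × ℤ)) (r : ℤ) :
    rowSum F r = ∑ x ∈ F, (if x.1 = r then (1:ℤ) else 0) := by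
  unfold rowSum
  rw [Finset.card_filter]
  push_cast
  rfl

lemma colSum_eq_sum (F : Finset (ℤ × ℤ)) (c : ℤ) :
    colSum F c = ∑ x ∈ F, (if x.2 = c then (1:ℤ) else 0) := by
  unfold colSum
  rw [Finset.card_filter]
  push_cast
  rfl

lemma switchFree_of_unique {F : Finset (ℤ × ℤ)} (h : uniquelyDetermined F) :
    SwitchFree F := by
  rintro ⟨i, j⟩ hp ⟨i', j'⟩ hq hne1 hne2
  simp only at hne1 hne2
  by_contra hcon
  push_neg at hcon
  obtain ⟨h1, h2⟩ := hcon
  simp only at h1 h2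
  set F' : Finset (ℤ × ℤ) :=
    insert (i, j') (insert (i', j) ((F.erase (i, j)).erase (i', j'))) with hF'
  have hne : ((i,j') : ℤ × ℤ) ≠ (i', j) := by
    intro hc; exact hne1 (congrArg Prod.fst hc)
  have hmem1 : ((i,j') : ℤ × ℤ) ∉ (F.erase (i, j)).erase (i', j') := by
    intro hc; exact h1 (Finset.mem_of_mem_erase (Finset.mem_of_mem_erase hc))
  have hmem2 : ((i',j) : ℤ × ℤ) ∉ (F.erase (i, j)).erase (i', j') := by
    intro hc; exact h2 (Finset.mem_of_mem_erase (Finset.mem_of_mem_erase hc))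
  have hq_er : ((i',j') : ℤ × ℤ) ∈ F.erase (i, j) := by
    refine Finset.mem_erase.2 ⟨?_, hq⟩
    intro hc; exact hne1 (congrArg Prod.fst hc).symm
  have key : ∀ g : ℤ × ℤ → ℤ, g (i,j) + g (i',j') = g (i,j') + g (i',j) →
      ∑ x ∈ F', g x = ∑ x ∈ F, g x := by
    intro g hg
    rw [hF', Finset.sum_insert (by simp [Finset.mem_insert, hne, hmem1]),
      Finset.sum_insert hmem2, Finset.sum_erase_eq_sub hq_er,
      Finset.sum_erase_eq_sub hp]
    linarith
  have hFF : F' = F := by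
    apply h
    · intro r
      rw [rowSum_eq_sum, rowSum_eq_sum]
      apply key
      simp only
      try split_ifs <;> ring
    · intro c
      rw [colSum_eq_sum, colSum_eq_sum]
      apply key
      simp only
      try split_ifs <;> ring
  have : ((i,j') : ℤ × ℤ) ∈ F := by
    rw [← hFF, hF']; exact Finset.mem_insert_self _ _
  exact h1 this


lemma colSum_lt {F : Finset (ℤ × ℤ)} (sf : SwitchFree F) {i j j' : ℤ}
    (h1 : (i, j) ∈ F) (h2 : (i, j') ∉ F) : colSum F j' + 1 ≤ colSum F j := by
  have hjj : j ≠ j' := by rintro rfl; exact h2 h1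
  unfold colSum
  have hsub : (F.filter fun p => p.2 = j').card ≤ ((F.filter fun p => p.2 = j).erase (i, j)).card := by
    apply Finset.card_le_card_of_injOn (fun p => (p.1, j))
    · rintro ⟨r, c⟩ hr
      obtain ⟨hrF, hc⟩ := Finset.mem_filter.1 hr
      simp only at hc
      rw [hc] at hrF
      have hri : r ≠ i := by rintro rfl; exact h2 hrF
      refine Finset.mem_erase.2 ⟨?_, ?_⟩
      · intro hcon
        exact hri (congrArg Prod.fst hcon)
      · refine Finset.mem_filter.2 ⟨?_, rfl⟩
        rcases sf (r, j') hrF (i, j) h1 hri hjj.symm with hA | hB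
        · exact hA
        · exact absurd hB h2
    · rintro ⟨r, c⟩ hr ⟨r', c'⟩ hr' hEq
      obtain ⟨-, hc⟩ := Finset.mem_filter.1 hr
      obtain ⟨-, hc'⟩ := Finset.mem_filter.1 hr'
      simp only at hc hc'
      have : r = r' := congrArg Prod.fst hEq
      simp [this, hc, hc']
  have hmem : (i, j) ∈ F.filter fun p => p.2 = j := Finset.mem_filter.2 ⟨h1, rfl⟩
  have := Finset.card_erase_of_mem hmem
  have hpos : 0 < (F.filter fun p => p.2 = j).card := Finset.card_pos.2 ⟨_, hmem⟩
  push_cast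
  omega

lemma rowSum_lt {F : Finset (ℤ × ℤ)} (sf : SwitchFree F) {i i' j : ℤ}
    (h1 : (i, j) ∈ F) (h2 : (i', j) ∉ F) : rowSum F i' + 1 ≤ rowSum F i := by
  have hii : i ≠ i' := by rintro rfl; exact h2 h1
  unfold rowSum
  have hsub : (F.filter fun p => p.1 = i').card ≤ ((F.filter fun p => p.1 = i).erase (i, j)).card := by
    apply Finset.card_le_card_of_injOn (fun p => (i, p.2))
    · rintro ⟨r, c⟩ hr
      obtain ⟨hrF, hc⟩ := Finset.mem_filter.1 hr
      simp only at hc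
      rw [hc] at hrF
      have hcj : c ≠ j := by rintro rfl; exact h2 hrF
      refine Finset.mem_erase.2 ⟨?_, ?_⟩
      · intro hcon
        exact hcj (congrArg Prod.snd hcon)
      · refine Finset.mem_filter.2 ⟨?_, rfl⟩
        rcases sf (i, j) h1 (i', c) hrF hii (Ne.symm hcj) with hA | hB
        · exact hA
        · exact absurd hB h2
    · rintro ⟨r, c⟩ hr ⟨r', c'⟩ hr' hEq
      obtain ⟨-, hc⟩ := Finset.mem_filter.1 hr
      obtain ⟨-, hc'⟩ := Finset.mem_filter.1 hr'
      simp only at hc hc'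
      have : c = c' := congrArg Prod.snd hEq
      simp [this, hc, hc']
  have hmem : (i, j) ∈ F.filter fun p => p.1 = i := Finset.mem_filter.2 ⟨h1, rfl⟩
  have := Finset.card_erase_of_mem hmem
  have hpos : 0 < (F.filter fun p => p.1 = i).card := Finset.card_pos.2 ⟨_, hmem⟩
  push_cast
  omega


lemma exists_pairing_le (s t : Finset (ℤ × ℤ)) (hdisj : Disjoint s t)
    (hle : s.card ≤ t.card) :
    ∃ p : ℤ × ℤ → Option (ℤ × ℤ),
      (∀ x y, p x = some y → p y = some x) ∧
      (∀ x y, p x = some y → (x ∈ s ∧ y ∈ t) ∨ (x ∈ t ∧ y ∈ s)) ∧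
      (s.filter fun x => p x = none).card = s.card - t.card ∧
      (t.filter fun x => p x = none).card = t.card - s.card := by
  classical
  obtain ⟨t', ht'sub, ht'card⟩ := Finset.exists_subset_card_eq hle
  have e : {x // x ∈ s} ≃ {x // x ∈ t'} := Finset.equivOfCardEq ht'card.symm
  refine ⟨fun x => if hx : x ∈ s then some ((e ⟨x, hx⟩ : {x // x ∈ t'}) : ℤ × ℤ)
      else if hx' : x ∈ t' then some ((e.symm ⟨x, hx'⟩ : {x // x ∈ s}) : ℤ × ℤ)
      else none, ?_, ?_, ?_, ?_⟩
  · intro x y hxy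
    simp only at hxy ⊢
    by_cases hx : x ∈ s
    · rw [dif_pos hx] at hxy
      have hy : y ∈ t' := by
        have := (e ⟨x, hx⟩).2
        rw [Option.some_inj.1 hxy] at this
        exact this
      have hys : y ∉ s := fun hc => (Finset.disjoint_left.1 hdisj hc) (ht'sub hy)
      rw [dif_neg hys, dif_pos hy]
      congr 1
      have : (⟨y, hy⟩ : {x // x ∈ t'}) = e ⟨x, hx⟩ := by
        apply Subtype.ext
        simp [← Option.some_inj.1 hxy]
      rw [this, Equiv.symm_apply_apply]
    · by_cases hx' : x ∈ t'
      · rw [dif_neg hx, dif_pos hx'] at hxy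
        have hy : y ∈ s := by
          have := (e.symm ⟨x, hx'⟩).2
          rw [Option.some_inj.1 hxy] at this
          exact this
        rw [dif_pos hy]
        congr 1
        have : (⟨y, hy⟩ : {x // x ∈ s}) = e.symm ⟨x, hx'⟩ := by
          apply Subtype.ext
          simp [← Option.some_inj.1 hxy]
        rw [this, Equiv.apply_symm_apply]
      · rw [dif_neg hx, dif_neg hx'] at hxy
        exact absurd hxy (by simp)
  · intro x y hxy
    simp only at hxy ⊢
    by_cases hx : x ∈ s
    · rw [dif_pos hx] at hxy
      left
      refine ⟨hx, ?_⟩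
      have := (e ⟨x, hx⟩).2
      rw [Option.some_inj.1 hxy] at this
      exact ht'sub this
    · by_cases hx' : x ∈ t'
      · rw [dif_neg hx, dif_pos hx'] at hxy
        right
        refine ⟨ht'sub hx', ?_⟩
        have := (e.symm ⟨x, hx'⟩).2
        rw [Option.some_inj.1 hxy] at this
        exact this
      · rw [dif_neg hx, dif_neg hx'] at hxy
        exact absurd hxy (by simp)
  · have : (s.filter fun x => (if hx : x ∈ s then some ((e ⟨x, hx⟩ : {x // x ∈ t'}) : ℤ × ℤ)
      else if hx' : x ∈ t' then some ((e.symm ⟨x, hx'⟩ : {x // x ∈ s}) : ℤ × ℤ)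
      else none) = none) = ∅ := by
      apply Finset.filter_false_of_mem
      intro x hx
      rw [dif_pos hx]
      simp
    rw [this]
    simp
    omega
  · have : (t.filter fun x => (if hx : x ∈ s then some ((e ⟨x, hx⟩ : {x // x ∈ t'}) : ℤ × ℤ)
      else if hx' : x ∈ t' then some ((e.symm ⟨x, hx'⟩ : {x // x ∈ s}) : ℤ × ℤ)
      else none) = none) = t \ t' := by
      ext x
      simp only [Finset.mem_filter, Finset.mem_sdiff]
      constructor
      · rintro ⟨hxt, hnone⟩
        refine ⟨hxt, ?_⟩
        intro hx'
        have hxs : x ∉ s := fun hc => (Finset.disjoint_left.1 hdisj hc) (ht'sub hx')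
        rw [dif_neg hxs, dif_pos hx'] at hnone
        simp at hnone
      · rintro ⟨hxt, hx'⟩
        refine ⟨hxt, ?_⟩
        have hxs : x ∉ s := fun hc => (Finset.disjoint_left.1 hdisj hc) hxt
        rw [dif_neg hxs, dif_neg hx']
    rw [this, Finset.card_sdiff_of_subset ht'sub, ht'card]

lemma exists_pairing (s t : Finset (ℤ × ℤ)) (hdisj : Disjoint s t) :
    ∃ p : ℤ × ℤ → Option (ℤ × ℤ),
      (∀ x y, p x = some y → p y = some x) ∧
      (∀ x y, p x = some y → (x ∈ s ∧ y ∈ t) ∨ (x ∈ t ∧ y ∈ s)) ∧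
      (s.filter fun x => p x = none).card = s.card - t.card ∧
      (t.filter fun x => p x = none).card = t.card - s.card := by
  rcases le_total s.card t.card with h | h
  · exact exists_pairing_le s t hdisj h
  · obtain ⟨p, h1, h2, h3, h4⟩ := exists_pairing_le t s hdisj.symm h
    exact ⟨p, h1, fun x y hxy => (h2 x y hxy).symm, h4, h3⟩


lemma spread_range : ∀ (n : ℕ) (s : Finset ℤ) (hne : s.Nonempty), s.card = n →
    (∀ a ∈ s, ∀ b ∈ s, a ≠ b → 2 ≤ |a - b|) →
    2 * ((s.card : ℤ) - 1) ≤ s.max' hne - s.min' hne := by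
  intro n
  induction n with
  | zero => intro s hne hcard; simp [Finset.card_eq_zero] at hcard; subst hcard; simp at hne
  | succ m ih =>
    intro s hne hcard h
    rcases Nat.lt_or_ge 1 (m+1) with h2 | h1
    swap
    · -- card = 1
      have : s.card = 1 := by omega
      have hmm : s.max' hne = s.min' hne := by
        obtain ⟨a, ha⟩ := Finset.card_eq_one.1 this
        subst ha; simp
      rw [this, hmm]; simp
    · -- card ≥ 2
      have hM : s.max' hne ∈ s := s.max'_mem hne
      set t := s.erase (s.max' hne) with ht
      have htcard : t.card = m := by rw [ht, Finset.card_erase_of_mem hM, hcard]; rfl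
      have htne : t.Nonempty := by
        rw [← Finset.card_pos, htcard]; omega
      have hsub : t ⊆ s := Finset.erase_subset _ _
      have ihr := ih t htne htcard (fun a ha b hb => h a (hsub ha) b (hsub hb))
      have hmaxt : t.max' htne ≤ s.max' hne - 2 := by
        have hmem : t.max' htne ∈ t := t.max'_mem htne
        have hne2 : t.max' htne ≠ s.max' hne := (Finset.mem_erase.1 hmem).1
        have hle : t.max' htne ≤ s.max' hne := s.le_max' _ (hsub hmem)
        have := h _ (hsub hmem) _ hM hne2
        rw [abs_sub_comm] at this
        rw [abs_of_nonneg (by omega)] at this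
        omega
      have hmins : s.min' hne ∈ t := by
        refine Finset.mem_erase.2 ⟨?_, s.min'_mem hne⟩
        intro hc
        have : ∀ x ∈ s, x = s.min' hne := by
          intro x hx
          have h1 := s.min'_le x hx
          have h2 := s.le_max' x hx
          omega
        have : s.card ≤ 1 := by
          apply Finset.card_le_one.2
          intro a ha b hb
          rw [this a ha, this b hb]
        omega
      have hmint : t.min' htne = s.min' hne := by
        apply le_antisymm
        · exact t.min'_le _ hmins
        · exact s.min'_le _ (hsub (t.min'_mem htne))
      rw [htcard] at ihr
      rw [hmint] at ihr
      rw [hcard]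
      push_cast
      push_cast at ihr
      omega

lemma spread_sum : ∀ (n : ℕ) (s : Finset ℤ), s.card = n →
    (∀ a ∈ s, ∀ b ∈ s, a ≠ b → 2 ≤ |a - b|) →
    (s.card : ℤ)^2 ≤ 2 * (∑ v ∈ s, |v|) + 1 := by
  intro n
  induction n using Nat.strong_induction_on with
  | _ n ih =>
    intro s hcard h
    match n, hcard with
    | 0, hcard => simp [Finset.card_eq_zero] at hcard; subst hcard; simp
    | 1, hcard =>
      obtain ⟨a, ha⟩ := Finset.card_eq_one.1 hcard
      subst ha
      simp
    | (m+2), hcard =>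
      have hne : s.Nonempty := by rw [← Finset.card_pos, hcard]; omega
      have hM : s.max' hne ∈ s := s.max'_mem hne
      have hrange := spread_range _ s hne rfl h
      -- min ∈ erase max as in previous proof
      have hmins : s.min' hne ∈ s.erase (s.max' hne) := by
        refine Finset.mem_erase.2 ⟨?_, s.min'_mem hne⟩
        intro hc
        have hall : ∀ x ∈ s, x = s.min' hne := by
          intro x hx
          have h1 := s.min'_le x hx
          have h2 := s.le_max' x hx
          omega
        have : s.card ≤ 1 := by
          apply Finset.card_le_one.2
          intro a ha b hb
          rw [hall a ha, hall b hb]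
        omega
      set t := (s.erase (s.max' hne)).erase (s.min' hne) with htdef
      have hsub : t ⊆ s := fun x hx => Finset.mem_of_mem_erase (Finset.mem_of_mem_erase hx)
      have htcard : t.card = m := by
        rw [htdef, Finset.card_erase_of_mem hmins, Finset.card_erase_of_mem hM, hcard]
        omega
      have iht := ih m (by omega) t htcard (fun a ha b hb => h a (hsub ha) b (hsub hb))
      have hsum : ∑ v ∈ s, |v| = |s.max' hne| + |s.min' hne| + ∑ v ∈ t, |v| := by
        rw [htdef, Finset.sum_erase_eq_sub hmins, Finset.sum_erase_eq_sub hM]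
        ring
      have habs : s.max' hne - s.min' hne ≤ |s.max' hne| + |s.min' hne| := by
        have := abs_sub_abs_le_abs_sub (s.max' hne) (s.min' hne)
        have h1 := le_abs_self (s.max' hne)
        have h2 := neg_abs_le (s.min' hne)
        omega
      rw [htcard] at iht
      rw [hcard] at hrange ⊢
      rw [hsum]
      push_cast at hrange iht ⊢
      nlinarith [hrange, iht, habs]


def stepW (f : ℤ × ℤ → Option (ℤ × ℤ)) : ℕ → ℤ × ℤ → ℤ × ℤ
  | 0, x => x
  | n+1, x => match f x with | none => x | some y => stepW f n y

def htW (f : ℤ × ℤ → Option (ℤ × ℤ)) : ℕ → ℤ × ℤ → ℕ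
  | 0, _ => 0
  | n+1, x => match f x with | none => 0 | some y => htW f n y + 1

def colsW (f : ℤ × ℤ → Option (ℤ × ℤ)) : ℕ → ℤ × ℤ → Finset ℤ
  | 0, x => {x.2}
  | n+1, x => match f x with | none => {x.2} | some y => insert x.2 (colsW f n y)

def rowsW (f : ℤ × ℤ → Option (ℤ × ℤ)) : ℕ → ℤ × ℤ → Finset ℤ
  | 0, x => {x.1}
  | n+1, x => match f x with | none => {x.1} | some y => insert x.1 (rowsW f n y)

lemma stepW_none {f : ℤ × ℤ → Option (ℤ × ℤ)} {x : ℤ × ℤ} (h : f x = none) (k : ℕ) :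
    stepW f k x = x ∧ htW f k x = 0 ∧ colsW f k x = {x.2} ∧ rowsW f k x = {x.1} := by
  cases k with
  | zero => exact ⟨rfl, rfl, rfl, rfl⟩
  | succ n => simp [stepW, htW, colsW, rowsW, h]

lemma stepW_some {f : ℤ × ℤ → Option (ℤ × ℤ)} {x y : ℤ × ℤ} (h : f x = some y) (n : ℕ) :
    stepW f (n+1) x = stepW f n y ∧ htW f (n+1) x = htW f n y + 1 ∧
    colsW f (n+1) x = insert x.2 (colsW f n y) ∧ rowsW f (n+1) x = insert x.1 (rowsW f n y) := by
  simp [stepW, htW, colsW, rowsW, h]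

lemma walk_stable {f : ℤ × ℤ → Option (ℤ × ℤ)} {φ : ℤ × ℤ → ℤ} {m : ℤ}
    (hφ : ∀ x y, f x = some y → φ y + 2 ≤ φ x)
    (hlow : ∀ x y, f x = some y → m ≤ φ y) :
    ∀ (n : ℕ) (x : ℤ × ℤ), φ x ≤ m + 2 * n → ∀ k, n ≤ k →
      stepW f k x = stepW f n x ∧ htW f k x = htW f n x ∧
      colsW f k x = colsW f n x ∧ rowsW f k x = rowsW f n x ∧ f (stepW f n x) = none := by
  intro n
  induction n with
  | zero =>
    intro x hx k _
    have hfx : f x = none := by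
      cases hfx : f x with
      | none => rfl
      | some y =>
        have h1 := hφ x y hfx
        have h2 := hlow x y hfx
        omega
    obtain ⟨s1, s2, s3, s4⟩ := stepW_none hfx k
    obtain ⟨t1, t2, t3, t4⟩ := stepW_none hfx 0
    exact ⟨by rw [s1, t1], by rw [s2, t2], by rw [s3, t3], by rw [s4, t4], by rw [t1]; exact hfx⟩
  | succ n ih =>
    intro x hx k hk
    cases hfx : f x with
    | none =>
      obtain ⟨s1, s2, s3, s4⟩ := stepW_none hfx k
      obtain ⟨t1, t2, t3, t4⟩ := stepW_none hfx (n+1)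
      exact ⟨by rw [s1, t1], by rw [s2, t2], by rw [s3, t3], by rw [s4, t4], by rw [t1]; exact hfx⟩
    | some y =>
      have hy : φ y ≤ m + 2 * n := by
        have := hφ x y hfx
        push_cast
        push_cast at hx
        omega
      obtain ⟨k', rfl⟩ : ∃ k', k = k' + 1 := ⟨k - 1, by omega⟩
      have hk' : n ≤ k' := by omega
      obtain ⟨s1, s2, s3, s4⟩ := stepW_some hfx k'
      obtain ⟨t1, t2, t3, t4⟩ := stepW_some hfx n
      obtain ⟨i1, i2, i3, i4, i5⟩ := ih y hy k' hk'
      refine ⟨?_, ?_, ?_, ?_, ?_⟩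
      · rw [s1, t1, i1]
      · rw [s2, t2, i2]
      · rw [s3, t3, i3]
      · rw [s4, t4, i4]
      · rw [t1, i5]

lemma stepW_memV {f : ℤ × ℤ → Option (ℤ × ℤ)} {V : Finset (ℤ × ℤ)}
    (hmem : ∀ x y, f x = some y → y ∈ V) :
    ∀ (n : ℕ) (x : ℤ × ℤ), x ∈ V → stepW f n x ∈ V := by
  intro n
  induction n with
  | zero => intro x hx; exact hx
  | succ n ih =>
    intro x hx
    cases hfx : f x with
    | none => rw [(stepW_none hfx (n+1)).1]; exact hx
    | some y => rw [(stepW_some hfx n).1]; exact ih y (hmem x y hfx)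

section WalkCount

variable {f g : ℤ × ℤ → Option (ℤ × ℤ)} {V : Finset (ℤ × ℤ)} {d e : ℤ → ℤ}

theorem walk_count (D : ℤ) (hD : 0 ≤ D)
    (hstep : ∀ x y, f x = some y → y ∈ V ∧
      ((y.1 = x.1 ∧ d y.2 + 2 ≤ d x.2) ∨ (y.2 = x.2 ∧ e x.1 + 2 ≤ e y.1)))
    (hmemx : ∀ x y, f x = some y → x ∈ V)
    (hg : ∀ x y, f x = some y → g y = some x)
    (hsum : ∀ C R : Finset ℤ,
      (∀ j ∈ C, ∀ j' ∈ C, j ≠ j' → 2 ≤ |d j - d j'|) →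
      (∀ i ∈ R, ∀ i' ∈ R, i ≠ i' → 2 ≤ |e i - e i'|) →
      (∑ j ∈ C, |d j|) + (∑ i ∈ R, |e i|) ≤ D) :
    (V.card : ℝ) ≤ ((V.filter fun x => f x = none).card : ℝ) *
      (2 * Real.sqrt ((D : ℝ) + 1) - 1) := by
  classical
  set φ : ℤ × ℤ → ℤ := fun x => d x.2 - e x.1 with hφdef
  have hφ : ∀ x y, f x = some y → φ y + 2 ≤ φ x := by
    intro x y hxy
    rcases (hstep x y hxy).2 with ⟨h1, h2⟩ | ⟨h1, h2⟩
    · simp only [hφdef, h1]; omega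
    · simp only [hφdef, h1]; omega
  set M : ℤ := ∑ x ∈ V, |φ x| with hMdef
  have hMnn : 0 ≤ M := Finset.sum_nonneg fun x _ => abs_nonneg _
  have hbound : ∀ x ∈ V, |φ x| ≤ M :=
    fun x hx => Finset.single_le_sum (fun y _ => abs_nonneg (φ y)) hx
  obtain ⟨N, hMN⟩ : ∃ n : ℕ, (n : ℤ) = M := ⟨M.toNat, Int.toNat_of_nonneg hMnn⟩
  have hlow : ∀ x y, f x = some y → -M ≤ φ y := by
    intro x y hxy
    have h1 := hbound y (hstep x y hxy).1
    have h2 := neg_abs_le (φ y)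
    omega
  have hup : ∀ x ∈ V, φ x ≤ -M + 2 * N := by
    intro x hx
    have h1 := hbound x hx
    have h2 := le_abs_self (φ x)
    omega
  -- main walk data
  set sink : ℤ × ℤ → ℤ × ℤ := fun x => stepW f N x with hsinkdef
  set ht : ℤ × ℤ → ℕ := fun x => htW f N x with hhtdef
  set cl : ℤ × ℤ → Finset ℤ := fun x => colsW f N x with hcldef
  set rw' : ℤ × ℤ → Finset ℤ := fun x => rowsW f N x with hrwdef
  have hstable := walk_stable hφ hlow (m := -M)
  have hsinknone : ∀ x ∈ V, f (sink x) = none := by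
    intro x hx
    exact (hstable N x (hup x hx) N le_rfl).2.2.2.2
  have hsinkV : ∀ x ∈ V, sink x ∈ V := by
    intro x hx
    exact stepW_memV (fun x y h => (hstep x y h).1) N x hx
  have hF2 : ∀ x, f x = none → sink x = x ∧ ht x = 0 ∧ cl x = {x.2} ∧ rw' x = {x.1} :=
    fun x hx => stepW_none hx N
  have hF1 : ∀ x y, f x = some y → sink x = sink y ∧ ht x = ht y + 1 ∧
      cl x = insert x.2 (cl y) ∧ rw' x = insert x.1 (rw' y) := by
    intro x y hxy
    have hyV : y ∈ V := (hstep x y hxy).1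
    have hxV : x ∈ V := hmemx x y hxy
    -- N ≥ 1
    rcases Nat.eq_zero_or_pos N with hN0 | hNpos
    · exfalso
      have h1 := hφ x y hxy
      have h2 := hbound x hxV
      have h3 := hbound y hyV
      have h4 := le_abs_self (φ x)
      have h5 := neg_abs_le (φ y)
      rw [hN0] at hMN
      simp at hMN
      omega
    obtain ⟨N', rfl⟩ : ∃ N', N = N' + 1 := ⟨N - 1, by omega⟩
    obtain ⟨s1, s2, s3, s4⟩ := stepW_some hxy N'
    have hyle : φ y ≤ -M + 2 * N' := by
      have h1 := hφ x y hxy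
      have h2 := hup x hxV
      push_cast at h2 ⊢
      omega
    obtain ⟨i1, i2, i3, i4, -⟩ := hstable N' y hyle (N' + 1) (by omega)
    exact ⟨by simp only [hsinkdef]; rw [s1, i1], by simp only [hhtdef]; rw [s2, i2],
      by simp only [hcldef]; rw [s3, i3], by simp only [hrwdef]; rw [s4, i4]⟩
  have hmemhead : ∀ x : ℤ × ℤ, x.2 ∈ cl x ∧ x.1 ∈ rw' x := by
    intro x
    cases hfx : f x with
    | none =>
      obtain ⟨-, -, h3, h4⟩ := hF2 x hfx
      rw [h3, h4]; simp
    | some y =>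
      obtain ⟨-, -, h3, h4⟩ := hF1 x y hfx
      rw [h3, h4]; simp
  have hinv : ∀ (h : ℕ) (x : ℤ × ℤ), x ∈ V → ht x = h →
      ((∀ j ∈ cl x, j ≠ x.2 → d j + 2 ≤ d x.2) ∧
       (∀ j ∈ cl x, ∀ j' ∈ cl x, j ≠ j' → 2 ≤ |d j - d j'|) ∧
       (∀ i ∈ rw' x, i ≠ x.1 → e x.1 + 2 ≤ e i) ∧
       (∀ i ∈ rw' x, ∀ i' ∈ rw' x, i ≠ i' → 2 ≤ |e i - e i'|) ∧
       (ht x + 2 = (cl x).card + (rw' x).card)) := by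
    intro h
    induction h using Nat.strong_induction_on with
    | _ h ih =>
      intro x hxV hhtx
      cases hfx : f x with
      | none =>
        obtain ⟨-, h2, h3, h4⟩ := hF2 x hfx
        rw [h2, h3, h4]
        refine ⟨?_, ?_, ?_, ?_, by simp⟩
        · intro j hj hne; simp at hj; exact absurd hj hne
        · intro j hj j' hj' hne; simp at hj hj'; rw [hj, hj'] at hne; exact absurd rfl hne
        · intro i hi hne; simp at hi; exact absurd hi hne
        · intro i hi i' hi' hne; simp at hi hi'; rw [hi, hi'] at hne; exact absurd rfl hne
      | some y =>
        obtain ⟨-, e2, e3, e4⟩ := hF1 x y hfx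
        have hyV := (hstep x y hfx).1
        have hlt : ht y < h := by omega
        obtain ⟨I1, I2, J1, J2, K⟩ := ih (ht y) hlt y hyV rfl
        rcases (hstep x y hfx).2 with ⟨hrow, hd⟩ | ⟨hcol, he⟩
        · -- row step: y.1 = x.1, column changes
          have hally : ∀ j ∈ cl y, d j ≤ d y.2 := by
            intro j hj
            by_cases hjy : j = y.2
            · rw [hjy]
            · have := I1 j hj hjy; omega
          have hall2 : ∀ j ∈ cl y, d j + 2 ≤ d x.2 := by
            intro j hj; have := hally j hj; omega
          have hnotin : x.2 ∉ cl y := by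
            intro hc; have := hall2 _ hc; omega
          have hrws : rw' x = rw' y := by
            rw [e4]
            exact Finset.insert_eq_self.2 (by rw [← hrow]; exact (hmemhead y).2)
          refine ⟨?_, ?_, ?_, ?_, ?_⟩
          · rw [e3]
            intro j hj hne
            rcases Finset.mem_insert.1 hj with hj0 | hj'
            · exact absurd hj0 hne
            · exact hall2 j hj'
          · rw [e3]
            intro j hj j' hj' hne
            rcases Finset.mem_insert.1 hj with hj0 | hj1 <;>
              rcases Finset.mem_insert.1 hj' with hj0' | hj1'
            · rw [hj0, hj0'] at hne; exact absurd rfl hne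
            · rw [hj0]
              have := hall2 j' hj1'
              rw [abs_of_nonneg (by omega)]; omega
            · rw [hj0']
              have := hall2 j hj1
              rw [abs_sub_comm, abs_of_nonneg (by omega)]; omega
            · exact I2 j hj1 j' hj1'  hne
          · rw [hrws]
            intro i hi hne
            have hne' : i ≠ y.1 := by rw [hrow]; exact hne
            have := J1 i hi hne'
            rw [← hrow]; exact this
          · rw [hrws]; exact J2
          · rw [e3, hrws, Finset.card_insert_of_notMem hnotin]
            omega
        · -- column step: y.2 = x.2, row changes
          have hally : ∀ i ∈ rw' y, e y.1 ≤ e i := by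
            intro i hi
            by_cases hiy : i = y.1
            · rw [hiy]
            · have := J1 i hi hiy; omega
          have hall2 : ∀ i ∈ rw' y, e x.1 + 2 ≤ e i := by
            intro i hi; have := hally i hi; omega
          have hnotin : x.1 ∉ rw' y := by
            intro hc; have := hall2 _ hc; omega
          have hcls : cl x = cl y := by
            rw [e3]
            exact Finset.insert_eq_self.2 (by rw [← hcol]; exact (hmemhead y).1)
          refine ⟨?_, ?_, ?_, ?_, ?_⟩
          · rw [hcls]
            intro j hj hne
            have hne' : j ≠ y.2 := by rw [hcol]; exact hne
            have := I1 j hj hne'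
            rw [← hcol]; exact this
          · rw [hcls]; exact I2
          · rw [e4]
            intro i hi hne
            rcases Finset.mem_insert.1 hi with hi0 | hi'
            · exact absurd hi0 hne
            · exact hall2 i hi'
          · rw [e4]
            intro i hi i' hi' hne
            rcases Finset.mem_insert.1 hi with hi0 | hi1 <;>
              rcases Finset.mem_insert.1 hi' with hi0' | hi1'
            · rw [hi0, hi0'] at hne; exact absurd rfl hne
            · rw [hi0]
              have := hall2 i' hi1'
              rw [abs_sub_comm, abs_of_nonneg (by omega)]; omega
            · rw [hi0']
              have := hall2 i hi1
              rw [abs_of_nonneg (by omega)]; omega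
            · exact J2 i hi1 i' hi1' hne
          · rw [e4, hcls, Finset.card_insert_of_notMem hnotin]
            omega
  have hinj : ∀ (h : ℕ) (x y : ℤ × ℤ), x ∈ V → y ∈ V → ht x = h → ht y = h →
      sink x = sink y → x = y := by
    intro h
    induction h using Nat.strong_induction_on with
    | _ h ih =>
      intro x y hxV hyV hhx hhy hs
      cases hfx : f x with
      | none =>
        cases hfy : f y with
        | none =>
          rw [(hF2 x hfx).1, (hF2 y hfy).1] at hs
          exact hs
        | some y' =>
          have := (hF1 y y' hfy).2.1
          have := (hF2 x hfx).2.1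
          omega
      | some x' =>
        cases hfy : f y with
        | none =>
          have := (hF1 x x' hfx).2.1
          have := (hF2 y hfy).2.1
          omega
        | some y' =>
          obtain ⟨fs1, fh1, -, -⟩ := hF1 x x' hfx
          obtain ⟨fs2, fh2, -, -⟩ := hF1 y y' hfy
          have hx'V := (hstep x x' hfx).1
          have hy'V := (hstep y y' hfy).1
          have hxy' : x' = y' := by
            apply ih (ht x') (by omega) x' y' hx'V hy'V rfl (by omega)
            rw [← fs1, ← fs2]; exact hs
          have g1 := hg x x' hfx
          have g2 := hg y y' hfy
          rw [hxy'] at g1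
          exact Option.some_inj.1 (g1.symm.trans g2)
  have hhtbound : ∀ x ∈ V, ((ht x : ℤ) + 2)^2 ≤ 4 * (D + 1) := by
    intro x hxV
    obtain ⟨I1, I2, J1, J2, K⟩ := hinv (ht x) x hxV rfl
    have hinjd : Set.InjOn d (cl x) := by
      intro j hj j' hj' hdd
      by_contra hne
      have := I2 j (by simpa using hj) j' (by simpa using hj') hne
      rw [hdd] at this
      simp at this
    have hinje : Set.InjOn e (rw' x) := by
      intro i hi i' hi' hee
      by_contra hne
      have := J2 i (by simpa using hi) i' (by simpa using hi') hne
      rw [hee] at this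
      simp at this
    have hcardd : ((cl x).image d).card = (cl x).card := Finset.card_image_of_injOn hinjd
    have hcarde : ((rw' x).image e).card = (rw' x).card := Finset.card_image_of_injOn hinje
    have hgapd : ∀ a ∈ (cl x).image d, ∀ b ∈ (cl x).image d, a ≠ b → 2 ≤ |a - b| := by
      intro a ha b hb hne
      obtain ⟨j, hj, rfl⟩ := Finset.mem_image.1 ha
      obtain ⟨j', hj', rfl⟩ := Finset.mem_image.1 hb
      exact I2 j hj j' hj' (fun hc => hne (by rw [hc]))
    have hgape : ∀ a ∈ (rw' x).image e, ∀ b ∈ (rw' x).image e, a ≠ b → 2 ≤ |a - b| := by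
      intro a ha b hb hne
      obtain ⟨i, hi, rfl⟩ := Finset.mem_image.1 ha
      obtain ⟨i', hi', rfl⟩ := Finset.mem_image.1 hb
      exact J2 i hi i' hi' (fun hc => hne (by rw [hc]))
    have h1 := spread_sum _ ((cl x).image d) rfl hgapd
    have h2 := spread_sum _ ((rw' x).image e) rfl hgape
    have hs1 : ∑ v ∈ (cl x).image d, |v| = ∑ j ∈ cl x, |d j| := Finset.sum_image fun j hj j' hj' hdd => hinjd (by simpa using hj) (by simpa using hj') hdd
    have hs2 : ∑ v ∈ (rw' x).image e, |v| = ∑ i ∈ rw' x, |e i| := Finset.sum_image fun i hi i' hi' hee => hinje (by simpa using hi) (by simpa using hi') hee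
    have hDD := hsum (cl x) (rw' x) I2 J2
    rw [hcardd, hs1] at h1
    rw [hcarde, hs2] at h2
    have hK : ((ht x : ℤ) + 2) = ((cl x).card : ℤ) + ((rw' x).card : ℤ) := by
      have := congrArg (fun n : ℕ => (n : ℤ)) K
      push_cast at this
      linarith
    rw [hK]
    nlinarith [h1, h2, hDD, sq_nonneg (((cl x).card : ℤ) - ((rw' x).card : ℤ))]
  -- final counting
  have hsq1 : (1 : ℝ) ≤ Real.sqrt ((D : ℝ) + 1) := by
    have h0 : (0:ℝ) ≤ (D:ℝ) := by exact_mod_cast hD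
    have := Real.sqrt_le_sqrt (show (1:ℝ) ≤ (D:ℝ) + 1 by linarith)
    simpa using this
  have hfacnn : (0 : ℝ) ≤ 2 * Real.sqrt ((D : ℝ) + 1) - 1 := by linarith
  rcases V.eq_empty_or_nonempty with hV | hV
  · rw [hV]
    simp
  · obtain ⟨x₀, hx₀V, hmax⟩ := V.exists_max_image ht hV
    have hcount : V.card ≤ (V.filter fun x => f x = none).card * (ht x₀ + 1) := by
      have hinjon : Set.InjOn (fun x => (sink x, ht x)) V := by
        intro x hx y hy hxy
        simp only [Prod.mk.injEq] at hxy
        exact hinj (ht x) x y hx hy rfl hxy.2.symm hxy.1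
      have hmaps : ∀ x ∈ V, (sink x, ht x) ∈
          (V.filter fun z => f z = none) ×ˢ Finset.range (ht x₀ + 1) := by
        intro x hx
        rw [Finset.mem_product]
        constructor
        · exact Finset.mem_filter.2 ⟨hsinkV x hx, hsinknone x hx⟩
        · rw [Finset.mem_range]
          have := hmax x hx
          omega
      calc V.card ≤ ((V.filter fun z => f z = none) ×ˢ Finset.range (ht x₀ + 1)).card :=
            Finset.card_le_card_of_injOn _ hmaps hinjon
        _ = _ := by rw [Finset.card_product, Finset.card_range]
    have hreal : ((ht x₀ : ℝ) + 1) ≤ 2 * Real.sqrt ((D : ℝ) + 1) - 1 := by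
      have hb := hhtbound x₀ hx₀V
      have hb' : ((ht x₀ : ℝ) + 2)^2 ≤ 4 * ((D : ℝ) + 1) := by exact_mod_cast hb
      have h4 : Real.sqrt (4 * ((D:ℝ)+1)) = 2 * Real.sqrt ((D:ℝ)+1) := by
        rw [show (4:ℝ) * ((D:ℝ)+1) = 2^2 * ((D:ℝ)+1) by ring,
          Real.sqrt_mul (by positivity), Real.sqrt_sq (by norm_num)]
      have : ((ht x₀ : ℝ) + 2) ≤ Real.sqrt (4 * ((D:ℝ)+1)) :=
        Real.le_sqrt_of_sq_le hb'
      rw [h4] at this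
      linarith
    calc (V.card : ℝ) ≤ ((V.filter fun x => f x = none).card : ℝ) * ((ht x₀ : ℝ) + 1) := by
          exact_mod_cast hcount
      _ ≤ _ := by
          apply mul_le_mul_of_nonneg_left hreal
          exact Nat.cast_nonneg _

end WalkCount

lemma colSum_zero_of_not_mem {F1 F2 : Finset (ℤ × ℤ)} {j : ℤ}
    (h : j ∉ (F1 ∪ F2).image Prod.snd) : colSum F1 j - colSum F2 j = 0 := by
  have h1 : F1.filter (fun p => p.2 = j) = ∅ := by
    rw [Finset.filter_eq_empty_iff]
    intro p hp hpj
    exact h (Finset.mem_image.2 ⟨p, Finset.mem_union_left _ hp, hpj⟩)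
  have h2 : F2.filter (fun p => p.2 = j) = ∅ := by
    rw [Finset.filter_eq_empty_iff]
    intro p hp hpj
    exact h (Finset.mem_image.2 ⟨p, Finset.mem_union_right _ hp, hpj⟩)
  unfold colSum
  rw [h1, h2]
  simp

lemma rowSum_zero_of_not_mem {F1 F2 : Finset (ℤ × ℤ)} {i : ℤ}
    (h : i ∉ (F1 ∪ F2).image Prod.fst) : rowSum F1 i - rowSum F2 i = 0 := by
  have h1 : F1.filter (fun p => p.1 = i) = ∅ := by
    rw [Finset.filter_eq_empty_iff]
    intro p hp hpj
    exact h (Finset.mem_image.2 ⟨p, Finset.mem_union_left _ hp, hpj⟩)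
  have h2 : F2.filter (fun p => p.1 = i) = ∅ := by
    rw [Finset.filter_eq_empty_iff]
    intro p hp hpj
    exact h (Finset.mem_image.2 ⟨p, Finset.mem_union_right _ hp, hpj⟩)
  unfold rowSum
  rw [h1, h2]
  simp

lemma sum_abs_le_support (F1 F2 : Finset (ℤ × ℤ)) (C : Finset ℤ) (h : ℤ → ℤ)
    (S : Finset ℤ) (hzero : ∀ j, j ∉ S → h j = 0) :
    ∑ j ∈ C, |h j| ≤ ∑ j ∈ S, |h j| := by
  have h1 : ∑ j ∈ C ∩ S, |h j| = ∑ j ∈ C, |h j| := by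
    apply Finset.sum_subset (Finset.inter_subset_left)
    intro j hj hj2
    have : j ∉ S := fun hc => hj2 (Finset.mem_inter.2 ⟨hj, hc⟩)
    rw [hzero j this]
    simp
  rw [← h1]
  exact Finset.sum_le_sum_of_subset_of_nonneg (Finset.inter_subset_right)
    (fun j _ _ => abs_nonneg _)

lemma rowSum_split (F1 F2 : Finset (ℤ × ℤ)) (i : ℤ) :
    rowSum F1 i - rowSum F2 i =
      (((F1 \ F2).filter fun p => p.1 = i).card : ℤ) -
      (((F2 \ F1).filter fun p => p.1 = i).card : ℤ) := by
  have h1 : F1.filter (fun p => p.1 = i) =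
      ((F1 \ F2).filter fun p => p.1 = i) ∪ ((F1 ∩ F2).filter fun p => p.1 = i) := by
    rw [← Finset.filter_union, Finset.sdiff_union_inter]
  have h2 : F2.filter (fun p => p.1 = i) =
      ((F2 \ F1).filter fun p => p.1 = i) ∪ ((F1 ∩ F2).filter fun p => p.1 = i) := by
    rw [← Finset.filter_union]
    congr 1
    rw [Finset.inter_comm, Finset.sdiff_union_inter]
  have d1 : Disjoint ((F1 \ F2).filter fun p => p.1 = i) ((F1 ∩ F2).filter fun p => p.1 = i) :=
    Finset.disjoint_filter_filter (Finset.disjoint_sdiff_inter F1 F2)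
  have d2 : Disjoint ((F2 \ F1).filter fun p => p.1 = i) ((F1 ∩ F2).filter fun p => p.1 = i) := by
    apply Finset.disjoint_filter_filter
    rw [Finset.inter_comm]
    exact Finset.disjoint_sdiff_inter F2 F1
  unfold rowSum
  rw [h1, h2, Finset.card_union_of_disjoint d1, Finset.card_union_of_disjoint d2]
  push_cast
  ring

lemma colSum_split (F1 F2 : Finset (ℤ × ℤ)) (j : ℤ) :
    colSum F1 j - colSum F2 j =
      (((F1 \ F2).filter fun p => p.2 = j).card : ℤ) -
      (((F2 \ F1).filter fun p => p.2 = j).card : ℤ) := by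
  have h1 : F1.filter (fun p => p.2 = j) =
      ((F1 \ F2).filter fun p => p.2 = j) ∪ ((F1 ∩ F2).filter fun p => p.2 = j) := by
    rw [← Finset.filter_union, Finset.sdiff_union_inter]
  have h2 : F2.filter (fun p => p.2 = j) =
      ((F2 \ F1).filter fun p => p.2 = j) ∪ ((F1 ∩ F2).filter fun p => p.2 = j) := by
    rw [← Finset.filter_union]
    congr 1
    rw [Finset.inter_comm, Finset.sdiff_union_inter]
  have d1 : Disjoint ((F1 \ F2).filter fun p => p.2 = j) ((F1 ∩ F2).filter fun p => p.2 = j) :=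
    Finset.disjoint_filter_filter (Finset.disjoint_sdiff_inter F1 F2)
  have d2 : Disjoint ((F2 \ F1).filter fun p => p.2 = j) ((F1 ∩ F2).filter fun p => p.2 = j) := by
    apply Finset.disjoint_filter_filter
    rw [Finset.inter_comm]
    exact Finset.disjoint_sdiff_inter F2 F1
  unfold colSum
  rw [h1, h2, Finset.card_union_of_disjoint d1, Finset.card_union_of_disjoint d2]
  push_cast
  ring

noncomputable def sinkCount (F1 F2 : Finset (ℤ × ℤ)) : ℕ :=
  (∑ i ∈ (F1 ∪ F2).image Prod.fst,
    (((F1 \ F2).filter fun p => p.1 = i).card - ((F2 \ F1).filter fun p => p.1 = i).card)) +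
  (∑ j ∈ (F1 ∪ F2).image Prod.snd,
    (((F2 \ F1).filter fun p => p.2 = j).card - ((F1 \ F2).filter fun p => p.2 = j).card))

lemma lineDiff_nonneg (F1 F2 : Finset (ℤ × ℤ)) : 0 ≤ lineDiff F1 F2 := by
  unfold lineDiff
  have h1 : (0:ℤ) ≤ ∑ j ∈ (F1 ∪ F2).image Prod.snd, |colSum F1 j - colSum F2 j| :=
    Finset.sum_nonneg fun j _ => abs_nonneg _
  have h2 : (0:ℤ) ≤ ∑ i ∈ (F1 ∪ F2).image Prod.fst, |rowSum F1 i - rowSum F2 i| :=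
    Finset.sum_nonneg fun i _ => abs_nonneg _
  omega

lemma lineDiff_symm (F1 F2 : Finset (ℤ × ℤ)) : lineDiff F2 F1 = lineDiff F1 F2 := by
  unfold lineDiff
  rw [Finset.union_comm F2 F1]
  congr 1
  · exact Finset.sum_congr rfl fun j _ => abs_sub_comm _ _
  · exact Finset.sum_congr rfl fun i _ => abs_sub_comm _ _

lemma sinkCount_add (F1 F2 : Finset (ℤ × ℤ)) :
    (sinkCount F1 F2 : ℤ) + (sinkCount F2 F1 : ℤ) = lineDiff F1 F2 := by
  have hterm : ∀ a b : ℕ, ((a - b : ℕ) : ℤ) + ((b - a : ℕ) : ℤ) = |(a:ℤ) - (b:ℤ)| := by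
    intro a b
    rcases le_total (a:ℤ) (b:ℤ) with h | h
    · rw [abs_of_nonpos (by omega)]; omega
    · rw [abs_of_nonneg (by omega)]; omega
  unfold sinkCount lineDiff
  rw [Finset.union_comm F2 F1]
  push_cast
  have hrow : ∀ i ∈ (F1 ∪ F2).image Prod.fst,
      ((((F1 \ F2).filter fun p => p.1 = i).card - ((F2 \ F1).filter fun p => p.1 = i).card : ℕ) : ℤ)
      + ((((F2 \ F1).filter fun p => p.1 = i).card - ((F1 \ F2).filter fun p => p.1 = i).card : ℕ) : ℤ)
      = |rowSum F1 i - rowSum F2 i| := by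
    intro i _
    rw [rowSum_split F1 F2 i, hterm]
  have hcol : ∀ j ∈ (F1 ∪ F2).image Prod.snd,
      ((((F2 \ F1).filter fun p => p.2 = j).card - ((F1 \ F2).filter fun p => p.2 = j).card : ℕ) : ℤ)
      + ((((F1 \ F2).filter fun p => p.2 = j).card - ((F2 \ F1).filter fun p => p.2 = j).card : ℕ) : ℤ)
      = |colSum F1 j - colSum F2 j| := by
    intro j _
    rw [colSum_split F1 F2 j, hterm]
    rw [abs_sub_comm]
  rw [← Finset.sum_congr rfl hrow, ← Finset.sum_congr rfl hcol,
    Finset.sum_add_distrib, Finset.sum_add_distrib]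
  ring

lemma master {F1 F2 : Finset (ℤ × ℤ)} (sf1 : SwitchFree F1) (sf2 : SwitchFree F2) :
    ((((F1 \ F2).card + (F2 \ F1).card : ℕ)) : ℝ) ≤
      (sinkCount F1 F2 : ℝ) * (2 * Real.sqrt ((lineDiff F1 F2 : ℝ) + 1) - 1) := by
  classical
  set A := F1 \ F2 with hA
  set B := F2 \ F1 with hB
  have hAB : Disjoint A B := disjoint_sdiff_sdiff
  set d : ℤ → ℤ := fun j => colSum F1 j - colSum F2 j with hd
  set e : ℤ → ℤ := fun i => rowSum F1 i - rowSum F2 i with he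
  have hrowP : ∀ i : ℤ, ∃ p : ℤ × ℤ → Option (ℤ × ℤ),
      (∀ x y, p x = some y → p y = some x) ∧
      (∀ x y, p x = some y →
        (x ∈ A.filter (fun z => z.1 = i) ∧ y ∈ B.filter (fun z => z.1 = i)) ∨
        (x ∈ B.filter (fun z => z.1 = i) ∧ y ∈ A.filter (fun z => z.1 = i))) ∧
      ((A.filter (fun z => z.1 = i)).filter (fun x => p x = none)).card =
        (A.filter (fun z => z.1 = i)).card - (B.filter (fun z => z.1 = i)).card ∧
      ((B.filter (fun z => z.1 = i)).filter (fun x => p x = none)).card =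
        (B.filter (fun z => z.1 = i)).card - (A.filter (fun z => z.1 = i)).card :=
    fun i => exists_pairing _ _ (Finset.disjoint_filter_filter hAB)
  choose prow hprow1 hprow2 hprow3 hprow4 using hrowP
  have hcolP : ∀ j : ℤ, ∃ p : ℤ × ℤ → Option (ℤ × ℤ),
      (∀ x y, p x = some y → p y = some x) ∧
      (∀ x y, p x = some y →
        (x ∈ A.filter (fun z => z.2 = j) ∧ y ∈ B.filter (fun z => z.2 = j)) ∨
        (x ∈ B.filter (fun z => z.2 = j) ∧ y ∈ A.filter (fun z => z.2 = j))) ∧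
      ((A.filter (fun z => z.2 = j)).filter (fun x => p x = none)).card =
        (A.filter (fun z => z.2 = j)).card - (B.filter (fun z => z.2 = j)).card ∧
      ((B.filter (fun z => z.2 = j)).filter (fun x => p x = none)).card =
        (B.filter (fun z => z.2 = j)).card - (A.filter (fun z => z.2 = j)).card :=
    fun j => exists_pairing _ _ (Finset.disjoint_filter_filter hAB)
  choose pcol hpcol1 hpcol2 hpcol3 hpcol4 using hcolP
  set f : ℤ × ℤ → Option (ℤ × ℤ) :=
    fun x => if x ∈ A then prow x.1 x else if x ∈ B then pcol x.2 x else none with hf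
  set g : ℤ × ℤ → Option (ℤ × ℤ) :=
    fun x => if x ∈ A then pcol x.2 x else if x ∈ B then prow x.1 x else none with hgdef
  set V : Finset (ℤ × ℤ) := A ∪ B with hV
  have hnotB : ∀ x, x ∈ A → x ∉ B := fun x hx hc => (Finset.disjoint_left.1 hAB hx) hc
  have hfA : ∀ x ∈ A, f x = prow x.1 x := by
    intro x hx; simp only [hf]; rw [if_pos hx]
  have hfB : ∀ x ∈ B, f x = pcol x.2 x := by
    intro x hx; simp only [hf]
    rw [if_neg (fun hc => hnotB x hc hx), if_pos hx]
  have hgA : ∀ x ∈ A, g x = pcol x.2 x := by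
    intro x hx; simp only [hgdef]; rw [if_pos hx]
  have hgB : ∀ x ∈ B, g x = prow x.1 x := by
    intro x hx; simp only [hgdef]
    rw [if_neg (fun hc => hnotB x hc hx), if_pos hx]
  have hfnone : ∀ x, x ∉ A → x ∉ B → f x = none := by
    intro x hx1 hx2; simp only [hf]; rw [if_neg hx1, if_neg hx2]
  -- case analysis on f x = some y
  have hcases : ∀ x y, f x = some y →
      (x ∈ A ∧ y ∈ B ∧ y.1 = x.1 ∧ prow x.1 x = some y) ∨
      (x ∈ B ∧ y ∈ A ∧ y.2 = x.2 ∧ pcol x.2 x = some y) := by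
    intro x y hxy
    by_cases hxA : x ∈ A
    · left
      rw [hfA x hxA] at hxy
      rcases hprow2 x.1 x y hxy with ⟨h1, h2⟩ | ⟨h1, h2⟩
      · obtain ⟨hyB, hy1⟩ := Finset.mem_filter.1 h2
        exact ⟨hxA, hyB, hy1, hxy⟩
      · exact absurd (Finset.mem_filter.1 h1).1 (hnotB x hxA)
    · by_cases hxB : x ∈ B
      · right
        rw [hfB x hxB] at hxy
        rcases hpcol2 x.2 x y hxy with ⟨h1, h2⟩ | ⟨h1, h2⟩
        · exact absurd hxB (hnotB x (Finset.mem_filter.1 h1).1)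
        · obtain ⟨hyA, hy2⟩ := Finset.mem_filter.1 h2
          exact ⟨hxB, hyA, hy2, hxy⟩
      · rw [hfnone x hxA hxB] at hxy
        exact absurd hxy (by simp)
  have hstep : ∀ x y, f x = some y → y ∈ V ∧
      ((y.1 = x.1 ∧ d y.2 + 2 ≤ d x.2) ∨ (y.2 = x.2 ∧ e x.1 + 2 ≤ e y.1)) := by
    intro x y hxy
    rcases hcases x y hxy with ⟨hxA, hyB, hy1, -⟩ | ⟨hxB, hyA, hy2, -⟩
    · refine ⟨Finset.mem_union_right _ hyB, Or.inl ⟨hy1, ?_⟩⟩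
      obtain ⟨hxF1, hxnF2⟩ := Finset.mem_sdiff.1 (hA ▸ hxA)
      obtain ⟨hyF2, hynF1⟩ := Finset.mem_sdiff.1 (hB ▸ hyB)
      have e1 : ((x.1, x.2) : ℤ × ℤ) ∈ F1 := by rw [Prod.mk.eta]; exact hxF1
      have e2 : ((x.1, y.2) : ℤ × ℤ) ∉ F1 := by rw [← hy1, Prod.mk.eta]; exact hynF1
      have e3 : ((x.1, y.2) : ℤ × ℤ) ∈ F2 := by rw [← hy1, Prod.mk.eta]; exact hyF2
      have e4 : ((x.1, x.2) : ℤ × ℤ) ∉ F2 := by rw [Prod.mk.eta]; exact hxnF2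
      have c1 := colSum_lt sf1 e1 e2
      have c2 := colSum_lt sf2 e3 e4
      simp only [hd]
      omega
    · refine ⟨Finset.mem_union_left _ hyA, Or.inr ⟨hy2, ?_⟩⟩
      obtain ⟨hyF1, hynF2⟩ := Finset.mem_sdiff.1 (hA ▸ hyA)
      obtain ⟨hxF2, hxnF1⟩ := Finset.mem_sdiff.1 (hB ▸ hxB)
      have e1 : ((y.1, y.2) : ℤ × ℤ) ∈ F1 := by rw [Prod.mk.eta]; exact hyF1
      have e2 : ((x.1, y.2) : ℤ × ℤ) ∉ F1 := by rw [hy2, Prod.mk.eta]; exact hxnF1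
      have e3 : ((x.1, x.2) : ℤ × ℤ) ∈ F2 := by rw [Prod.mk.eta]; exact hxF2
      have e4 : ((y.1, x.2) : ℤ × ℤ) ∉ F2 := by rw [← hy2, Prod.mk.eta]; exact hynF2
      have c1 := rowSum_lt sf1 e1 e2
      have c2 := rowSum_lt sf2 e3 e4
      simp only [he]
      omega
  have hmemx : ∀ x y, f x = some y → x ∈ V := by
    intro x y hxy
    rcases hcases x y hxy with ⟨hxA, -, -, -⟩ | ⟨hxB, -, -, -⟩
    · exact Finset.mem_union_left _ hxA
    · exact Finset.mem_union_right _ hxB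
  have hginv : ∀ x y, f x = some y → g y = some x := by
    intro x y hxy
    rcases hcases x y hxy with ⟨hxA, hyB, hy1, hp⟩ | ⟨hxB, hyA, hy2, hp⟩
    · rw [hgB y hyB, hy1]
      exact hprow1 x.1 x y hp
    · rw [hgA y hyA, hy2]
      exact hpcol1 x.2 x y hp
  have hsum : ∀ C R : Finset ℤ,
      (∀ j ∈ C, ∀ j' ∈ C, j ≠ j' → 2 ≤ |d j - d j'|) →
      (∀ i ∈ R, ∀ i' ∈ R, i ≠ i' → 2 ≤ |e i - e i'|) →
      (∑ j ∈ C, |d j|) + (∑ i ∈ R, |e i|) ≤ lineDiff F1 F2 := by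
    intro C R _ _
    have h1 : ∑ j ∈ C, |d j| ≤ ∑ j ∈ (F1 ∪ F2).image Prod.snd, |colSum F1 j - colSum F2 j| := by
      apply sum_abs_le_support F1 F2
      intro j hj
      exact colSum_zero_of_not_mem hj
    have h2 : ∑ i ∈ R, |e i| ≤ ∑ i ∈ (F1 ∪ F2).image Prod.fst, |rowSum F1 i - rowSum F2 i| := by
      apply sum_abs_le_support F1 F2
      intro i hi
      exact rowSum_zero_of_not_mem hi
    unfold lineDiff
    omega
  have hw := walk_count (f := f) (g := g) (V := V) (d := d) (e := e)
    (lineDiff F1 F2) (lineDiff_nonneg F1 F2) hstep hmemx hginv hsum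
  -- identify the sink count
  have hsinks : (V.filter fun x => f x = none).card = sinkCount F1 F2 := by
    have hsplit : V.filter (fun x => f x = none) =
        (A.filter fun x => f x = none) ∪ (B.filter fun x => f x = none) := by
      rw [hV, Finset.filter_union]
    have hdisj2 : Disjoint (A.filter fun x => f x = none) (B.filter fun x => f x = none) :=
      Finset.disjoint_filter_filter hAB
    have hAeq : A.filter (fun x => f x = none) = A.filter (fun x => prow x.1 x = none) := by
      apply Finset.filter_congr
      intro x hx
      rw [hfA x hx]
    have hBeq : B.filter (fun x => f x = none) = B.filter (fun x => pcol x.2 x = none) := by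
      apply Finset.filter_congr
      intro x hx
      rw [hfB x hx]
    have hAcard : (A.filter fun x => prow x.1 x = none).card =
        ∑ i ∈ (F1 ∪ F2).image Prod.fst,
          ((A.filter fun p => p.1 = i).card - (B.filter fun p => p.1 = i).card) := by
      rw [Finset.card_eq_sum_card_fiberwise
        (f := Prod.fst) (t := (F1 ∪ F2).image Prod.fst)
        (fun x hx => Finset.mem_image_of_mem _
          (Finset.mem_union_left _ (Finset.mem_sdiff.1 (hA ▸ (Finset.mem_filter.1 hx).1)).1))]
      apply Finset.sum_congr rfl
      intro i _
      have hfib : (A.filter fun x => prow x.1 x = none).filter (fun x => x.1 = i) =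
          (A.filter (fun z => z.1 = i)).filter (fun x => prow i x = none) := by
        ext x
        simp only [Finset.mem_filter]
        constructor
        · rintro ⟨⟨hxA2, hnone⟩, hx1⟩
          rw [hx1] at hnone
          exact ⟨⟨hxA2, hx1⟩, hnone⟩
        · rintro ⟨⟨hxA2, hx1⟩, hnone⟩
          rw [← hx1] at hnone
          exact ⟨⟨hxA2, hnone⟩, hx1⟩
      rw [hfib, hprow3 i]
    have hBcard : (B.filter fun x => pcol x.2 x = none).card =
        ∑ j ∈ (F1 ∪ F2).image Prod.snd,
          ((B.filter fun p => p.2 = j).card - (A.filter fun p => p.2 = j).card) := by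
      rw [Finset.card_eq_sum_card_fiberwise
        (f := Prod.snd) (t := (F1 ∪ F2).image Prod.snd)
        (fun x hx => Finset.mem_image_of_mem _
          (Finset.mem_union_right _ (Finset.mem_sdiff.1 (hB ▸ (Finset.mem_filter.1 hx).1)).1))]
      apply Finset.sum_congr rfl
      intro j _
      have hfib : (B.filter fun x => pcol x.2 x = none).filter (fun x => x.2 = j) =
          (B.filter (fun z => z.2 = j)).filter (fun x => pcol j x = none) := by
        ext x
        simp only [Finset.mem_filter]
        constructor
        · rintro ⟨⟨hxB2, hnone⟩, hx2⟩
          rw [hx2] at hnone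
          exact ⟨⟨hxB2, hx2⟩, hnone⟩
        · rintro ⟨⟨hxB2, hx2⟩, hnone⟩
          rw [← hx2] at hnone
          exact ⟨⟨hxB2, hnone⟩, hx2⟩
      rw [hfib, hpcol4 j]
    rw [hsplit, Finset.card_union_of_disjoint hdisj2, hAeq, hBeq, hAcard, hBcard]
    rfl
  have hVcard : V.card = A.card + B.card := Finset.card_union_of_disjoint hAB
  rw [hsinks, hVcard] at hw
  exact_mod_cast hw

open scoped symmDiff

/-- If `F1` and `F1'` are both uniquely determined, then with `α₁ = α(F1, F1')` we have
`|F1 △ F1'| ≤ 2α₁·√(2α₁ + 1) − α₁`. -/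
theorem symmDiff_card_le_of_both_unique (F1 F1' : Finset (ℤ × ℤ))
    (hF1 : uniquelyDetermined F1) (hF1' : uniquelyDetermined F1') :
    ((F1 ∆ F1').card : ℝ) ≤
      2 * alpha F1 F1' * Real.sqrt (2 * alpha F1 F1' + 1) - alpha F1 F1' := by
  have sf1 := switchFree_of_unique hF1
  have sf2 := switchFree_of_unique hF1'
  have m1 := master sf1 sf2
  have m2 := master sf2 sf1
  rw [lineDiff_symm F1 F1'] at m2
  have hadd := sinkCount_add F1 F1'
  have h0 : (0:ℝ) ≤ (lineDiff F1 F1' : ℝ) := by exact_mod_cast lineDiff_nonneg F1 F1'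
  have hsq1 : (1:ℝ) ≤ Real.sqrt ((lineDiff F1 F1' : ℝ) + 1) := by
    have := Real.sqrt_le_sqrt (show (1:ℝ) ≤ (lineDiff F1 F1' : ℝ) + 1 by linarith)
    simpa using this
  have hcard : ((F1 ∆ F1').card : ℝ) = ((F1 \ F1').card : ℝ) + ((F1' \ F1).card : ℝ) := by
    have : (F1 ∆ F1') = (F1 \ F1') ∪ (F1' \ F1) := symmDiff_def F1 F1'
    rw [this, Finset.card_union_of_disjoint disjoint_sdiff_sdiff]
    push_cast
    ring
  unfold alpha
  rw [show 2 * ((lineDiff F1 F1' : ℝ)/2) = (lineDiff F1 F1' : ℝ) by ring]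
  set L : ℝ := (lineDiff F1 F1' : ℝ) with hLdef
  set X : ℝ := 2 * Real.sqrt (L + 1) - 1 with hXdef
  have haddR : (sinkCount F1 F1' : ℝ) + (sinkCount F1' F1 : ℝ) = L := by
    rw [hLdef]
    exact_mod_cast hadd
  have key : (sinkCount F1 F1' : ℝ) * X + (sinkCount F1' F1 : ℝ) * X = L * X := by
    rw [← add_mul, haddR]
  have m1' : ((F1 \ F1').card : ℝ) + ((F1' \ F1).card : ℝ) ≤ (sinkCount F1 F1' : ℝ) * X := by
    rw [hXdef]
    exact_mod_cast m1
  have m2' : ((F1' \ F1).card : ℝ) + ((F1 \ F1').card : ℝ) ≤ (sinkCount F1' F1 : ℝ) * X := by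
    rw [hXdef]
    exact_mod_cast m2
  rw [hcard]
  have hXexp : L * X = 2 * (L * Real.sqrt (L+1)) - L := by
    rw [hXdef]; ring
  linarith [m1', m2', key]
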